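/- Let (G,P) be a quasi-lattice ordered group and let μ be a finitely additive probability measure on (P,B_P) such that the family (μ(pP))_{p∈P} is summable. For p ∈ P set w_p = inf{μ(Ω) : Ω ∈ B_P, p ∈ Ω}. Then for every Ω ∈ B_P, the family (w_p)_{p∈Ω} is summable with μ(Ω) = ∑_{p∈Ω} w_p. -/

import Mathlib

/-- The order on `G` induced by the submonoid `P`: `g ≤ h` iff `g⁻¹ * h ∈ P`. -/
def QLe {G : Type*} [Group G] (P : Submonoid G) (g h : G) : Prop := g⁻¹ * h ∈ P

/-- `u` is the least upper bound of `g` and `h` with respect to `QLe P`. -/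
def QLub {G : Type*} [Group G] (P : Submonoid G) (g h u : G) : Prop :=
  QLe P g u ∧ QLe P h u ∧ ∀ v, QLe P g v → QLe P h v → QLe P u v

/-- `(G, P)` is a quasi-lattice ordered group. -/
structure QuasiLatticeOrdered {G : Type*} [Group G] (P : Submonoid G) : Prop where
  gen : Subgroup.closure (P : Set G) = ⊤
  cap : ∀ g ∈ P, g⁻¹ ∈ P → g = 1
  lub : ∀ g h : G, (∃ u, QLe P g u ∧ QLe P h u) → ∃ u, QLub P g h u

/-- Membership in the algebra `B_P` of subsets of `P` generated by the sets
`pP = {x | p⁻¹ x ∈ P}`, `p ∈ P`: the smallest collection of subsets containing the sets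
`pP` and closed under complements in `P`, finite unions and finite intersections. -/
inductive MemBP {G : Type*} [Group G] (P : Submonoid G) : Set G → Prop
  | basic (p : G) (hp : p ∈ P) : MemBP P {x | QLe P p x}
  | compl (Ω : Set G) : MemBP P Ω → MemBP P ((P : Set G) \ Ω)
  | union (Ω₁ Ω₂ : Set G) : MemBP P Ω₁ → MemBP P Ω₂ → MemBP P (Ω₁ ∪ Ω₂)
  | inter (Ω₁ Ω₂ : Set G) : MemBP P Ω₁ → MemBP P Ω₂ → MemBP P (Ω₁ ∩ Ω₂)

/-- For a finite set `J ⊆ P \ {e}`, `Ω_J = ⋂_{q ∈ J} (P \ qP)`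
(with the convention `Ω_∅ = P`). -/
def OmegaJ {G : Type*} [Group G] (P : Submonoid G) (J : Finset G) : Set G :=
  (P : Set G) ∩ ⋂ q ∈ J, {x | QLe P q x}ᶜ

/-- `w_p = inf { μ(Ω) : Ω ∈ B_P, p ∈ Ω }`. -/
noncomputable def wt {G : Type*} [Group G] (P : Submonoid G) (μ : Set G → ℝ) (p : G) : ℝ :=
  sInf {r : ℝ | ∃ Ω : Set G, MemBP P Ω ∧ p ∈ Ω ∧ μ Ω = r}

/-!
Write `ν(Ω) = ∑_{p ∈ Ω} w_p`. Two distinct points `p, q` of `P` are separated by the `B_P`-sets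
`pP \ qP` and `qP \ pP` (by `pP` and `qP \ pP` when `q < p`), so finitely many points of `Ω`
have pairwise disjoint neighbourhoods inside `Ω`; this gives `ν ≤ μ` on `B_P`. Since both are
additive, it then suffices to show `μ(P) ≤ ν(P)`.

Fix a finite `F ⊆ P` outside of which `∑ μ(qP)` is below `ε`, and split `P` into the atoms of the
partition generated by the cones `qP`, `q ∈ F`. A nonempty atom `A` has a least element `b`, and
every `B_P`-set containing `b` contains a cell `bP \ ⋃_{r ∈ R} rP`. Taking one of measure
`< w_b + ε'`, the rest of `A` is covered by finitely many cones `uP` with `u ∈ A \ {b}`, hence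
`u ∉ F`. Summing over the atoms gives `μ(P) ≤ ν(P) + 2ε`.
-/
section

variable {G : Type*} [Group G] {P : Submonoid G}

theorem QLe.refl (P : Submonoid G) (g : G) : QLe P g g := by simp [QLe, one_mem]

theorem QLe.trans {a b c : G} (h₁ : QLe P a b) (h₂ : QLe P b c) : QLe P a c := by
  simpa [QLe, mul_assoc] using mul_mem h₁ h₂

theorem QLe.mem_of_mem {p x : G} (hp : p ∈ P) (h : QLe P p x) : x ∈ P := by
  simpa using mul_mem hp h

theorem QuasiLatticeOrdered.qle_antisymm (hQL : QuasiLatticeOrdered P) {a b : G}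
    (h₁ : QLe P a b) (h₂ : QLe P b a) : a = b :=
  inv_mul_eq_one.1 (hQL.cap _ h₁ (by simpa [QLe] using h₂))

theorem QuasiLatticeOrdered.exists_lub_finset (hQL : QuasiLatticeOrdered P) {s : Finset G}
    (hs : s.Nonempty) {x : G} (hx : ∀ p ∈ s, QLe P p x) :
    ∃ b, (∀ p ∈ s, QLe P p b) ∧ ∀ y, (∀ p ∈ s, QLe P p y) → QLe P b y := by
  induction hs using Finset.Nonempty.cons_induction with
  | singleton a => exact ⟨a, by simp [QLe.refl], fun y hy => hy a (by simp)⟩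
  | cons a s ha hs ih =>
    obtain ⟨b, hb, hb_least⟩ := ih fun p hp => hx p (by simp [hp])
    obtain ⟨u, hau, hbu, hu_least⟩ :=
      hQL.lub a b ⟨x, hx a (by simp), hb_least x fun p hp => hx p (by simp [hp])⟩
    refine ⟨u, by simpa [hau] using fun p hp => (hb p hp).trans hbu, fun y hy => ?_⟩
    exact hu_least y (hy a (by simp)) (hb_least y fun p hp => hy p (by simp [hp]))

def cell (P : Submonoid G) (S R : Finset G) : Set G :=
  {x | (∀ p ∈ S, QLe P p x) ∧ ∀ r ∈ R, ¬ QLe P r x}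

theorem cell_subset {S : Finset G} (R : Finset G) (hS : S.Nonempty) (hSP : (S : Set G) ⊆ P) :
    cell P S R ⊆ P := fun _ hx =>
  QLe.mem_of_mem (hSP hS.choose_spec) (hx.1 _ hS.choose_spec)

theorem cell_union_right [DecidableEq G] (S R R' : Finset G) :
    cell P S (R ∪ R') = cell P S R ∩ cell P S R' := by
  ext x
  simp only [cell, Finset.mem_union, Set.mem_inter_iff, Set.mem_ofPred_eq]
  grind

theorem QuasiLatticeOrdered.exists_least_of_mem_cell (hQL : QuasiLatticeOrdered P)
    {S R : Finset G} (hS : S.Nonempty) {x : G} (hx : x ∈ cell P S R) :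
    ∃ b ∈ cell P S R, ∀ y ∈ cell P S R, QLe P b y := by
  obtain ⟨b, hb, hb_least⟩ := hQL.exists_lub_finset hS hx.1
  exact ⟨b, ⟨hb, fun r hr hrb => hx.2 r hr (hrb.trans (hb_least x hx.1))⟩,
    fun y hy => hb_least y hy.1⟩

theorem MemBP.subset {Ω : Set G} (h : MemBP P Ω) : Ω ⊆ P := by
  induction h with
  | basic p hp => exact fun _ hx => QLe.mem_of_mem hp hx
  | compl => exact Set.sdiff_subset
  | union _ _ _ _ h₁ h₂ => exact Set.union_subset h₁ h₂
  | inter _ _ _ _ h₁ _ => exact Set.inter_subset_left.trans h₁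

theorem memBP_univ : MemBP P (P : Set G) := by
  convert MemBP.basic (P := P) 1 P.one_mem
  ext x
  simp [QLe]

theorem memBP_empty : MemBP P (∅ : Set G) := by
  simpa using MemBP.compl _ (memBP_univ (P := P))

theorem MemBP.sdiff {A B : Set G} (hA : MemBP P A) (hB : MemBP P B) : MemBP P (A \ B) := by
  convert MemBP.inter _ _ hA (MemBP.compl _ hB) using 1
  ext x
  simp only [Set.mem_sdiff, Set.mem_inter_iff]
  exact ⟨fun h => ⟨h.1, hA.subset h.1, h.2⟩, fun h => ⟨h.1, h.2.2⟩⟩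

theorem memBP_biUnion {ι : Type*} (t : Finset ι) {f : ι → Set G}
    (h : ∀ i ∈ t, MemBP P (f i)) : MemBP P (⋃ i ∈ t, f i) := by
  classical
  induction t using Finset.induction_on with
  | empty => simpa using memBP_empty
  | insert a t _ ih =>
    rw [Finset.set_biUnion_insert]
    exact MemBP.union _ _ (h a (by simp)) (ih fun i hi => h i (by simp [hi]))

theorem memBP_cell {S R : Finset G} (hS : S.Nonempty) (hSP : (S : Set G) ⊆ P)
    (hRP : (R : Set G) ⊆ P) : MemBP P (cell P S R) := by
  have h : cell P S R =
      (P : Set G) \ ((⋃ p ∈ S, (P : Set G) \ {x | QLe P p x}) ∪ ⋃ r ∈ R, {x | QLe P r x}) := by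
    ext x
    constructor
    · intro hx
      refine ⟨cell_subset R hS hSP hx, ?_⟩
      simp only [Set.mem_union, Set.mem_iUnion, Set.mem_sdiff, Set.mem_ofPred_eq, not_or,
        not_exists]
      exact ⟨fun p hp h => h.2 (hx.1 p hp), fun r hr => hx.2 r hr⟩
    · simp only [Set.mem_sdiff, Set.mem_union, Set.mem_iUnion, Set.mem_ofPred_eq, not_or,
        not_exists, not_and, not_not]
      exact fun ⟨hxP, hS', hR'⟩ => ⟨fun p hp => hS' p hp hxP, hR'⟩
  rw [h]
  refine MemBP.compl _ (MemBP.union _ _ (memBP_biUnion S fun p hp => ?_)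
    (memBP_biUnion R fun r hr => MemBP.basic r (hRP hr)))
  exact MemBP.compl _ (MemBP.basic p (hSP hp))

theorem MemBP.exists_cell_subset_or_disjoint {Ω : Set G} (hΩ : MemBP P Ω) {b : G}
    (hb : b ∈ P) : ∃ R : Finset G, (R : Set G) ⊆ P ∧ b ∈ cell P {b} R ∧
      (cell P {b} R ⊆ Ω ∨ Disjoint (cell P {b} R) Ω) := by
  classical
  have hbP : ∀ R, cell P {b} R ⊆ P := fun R =>
    cell_subset R (Finset.singleton_nonempty b) (by simpa using hb)
  induction hΩ with
  | basic p hp =>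
    by_cases hpb : QLe P p b
    · refine ⟨∅, by simp, ⟨by simp [QLe.refl], by simp⟩, Or.inl fun x hx => ?_⟩
      exact hpb.trans (hx.1 b (Finset.mem_singleton_self b))
    · refine ⟨{p}, by simpa using hp, ⟨by simp [QLe.refl], by simpa using hpb⟩, Or.inr ?_⟩
      exact Set.disjoint_left.2 fun x hx => hx.2 p (Finset.mem_singleton_self p)
  | compl Ω _ ih =>
    obtain ⟨R, hRP, hbR, hsub | hdisj⟩ := ih
    · exact ⟨R, hRP, hbR, Or.inr (Set.disjoint_sdiff_right.mono_left hsub)⟩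
    · exact ⟨R, hRP, hbR, Or.inl (Set.subset_sdiff.2 ⟨hbP R, hdisj⟩)⟩
  | union Ω₁ Ω₂ _ _ ih₁ ih₂ =>
    obtain ⟨R₁, hR₁P, hbR₁, h₁⟩ := ih₁
    obtain ⟨R₂, hR₂P, hbR₂, h₂⟩ := ih₂
    refine ⟨R₁ ∪ R₂, by simpa using ⟨hR₁P, hR₂P⟩, by rw [cell_union_right]; exact ⟨hbR₁, hbR₂⟩, ?_⟩
    rw [cell_union_right]
    rcases h₁ with h₁ | h₁
    · exact Or.inl (Set.inter_subset_left.trans (h₁.trans Set.subset_union_left))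
    rcases h₂ with h₂ | h₂
    · exact Or.inl (Set.inter_subset_right.trans (h₂.trans Set.subset_union_right))
    · exact Or.inr (Set.disjoint_union_right.2 ⟨h₁.mono_left Set.inter_subset_left,
        h₂.mono_left Set.inter_subset_right⟩)
  | inter Ω₁ Ω₂ _ _ ih₁ ih₂ =>
    obtain ⟨R₁, hR₁P, hbR₁, h₁⟩ := ih₁
    obtain ⟨R₂, hR₂P, hbR₂, h₂⟩ := ih₂
    refine ⟨R₁ ∪ R₂, by simpa using ⟨hR₁P, hR₂P⟩, by rw [cell_union_right]; exact ⟨hbR₁, hbR₂⟩, ?_⟩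
    rw [cell_union_right]
    rcases h₁ with h₁ | h₁
    swap
    · exact Or.inr ((h₁.mono_left Set.inter_subset_left).mono_right Set.inter_subset_left)
    rcases h₂ with h₂ | h₂
    · exact Or.inl (Set.inter_subset_inter h₁ h₂)
    · exact Or.inr ((h₂.mono_left Set.inter_subset_right).mono_right Set.inter_subset_right)

theorem QuasiLatticeOrdered.exists_cover_cell_sdiff [DecidableEq G]
    (hQL : QuasiLatticeOrdered P) (S R R' : Finset G) :
    ∃ U : Finset G, (U : Set G) ⊆ cell P S R ∧ (∀ u ∈ U, ∃ r ∈ R', QLe P r u) ∧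
      cell P S R \ cell P S (R ∪ R') ⊆ ⋃ u ∈ U, {x | QLe P u x} := by
  classical
  have hleast : ∀ r, ∃ u, (cell P (insert r S) R).Nonempty →
      u ∈ cell P (insert r S) R ∧ ∀ y ∈ cell P (insert r S) R, QLe P u y := by
    intro r
    by_cases h : (cell P (insert r S) R).Nonempty
    · obtain ⟨u, hu⟩ := hQL.exists_least_of_mem_cell (Finset.insert_nonempty r S) h.some_mem
      exact ⟨u, fun _ => hu⟩
    · exact ⟨1, fun h' => absurd h' h⟩
  choose u hu using hleast
  have mem_cell_insert : ∀ {r x}, x ∈ cell P (insert r S) R ↔ QLe P r x ∧ x ∈ cell P S R := by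
    simp [cell, and_assoc]
  refine ⟨(R'.filter fun r => (cell P (insert r S) R).Nonempty).image u, ?_, ?_, ?_⟩
  · intro _ h
    obtain ⟨r, hr, rfl⟩ := Finset.mem_image.1 h
    exact (mem_cell_insert.1 (hu r (Finset.mem_filter.1 hr).2).1).2
  · intro _ h
    obtain ⟨r, hr, rfl⟩ := Finset.mem_image.1 h
    obtain ⟨hrR', hne⟩ := Finset.mem_filter.1 hr
    exact ⟨r, hrR', (mem_cell_insert.1 (hu r hne).1).1⟩
  · rintro x ⟨hx, hx'⟩
    obtain ⟨r, hr, hrx⟩ : ∃ r ∈ R', QLe P r x := by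
      by_contra! h
      exact hx' ⟨hx.1, fun r hr => (Finset.mem_union.1 hr).elim (hx.2 r) (h r)⟩
    have hxr : x ∈ cell P (insert r S) R := mem_cell_insert.2 ⟨hrx, hx⟩
    exact Set.mem_iUnion₂.2 ⟨u r, Finset.mem_image_of_mem u (Finset.mem_filter.2 ⟨hr, x, hxr⟩),
      (hu r ⟨x, hxr⟩).2 x hxr⟩

-- The atom of the partition of `P` by the cones `qP`, `q ∈ F`, that lies in exactly the cones
-- with `q ∈ T`; the element `1` only makes it a subset of `P`.
def atom (P : Submonoid G) [DecidableEq G] (F T : Finset G) : Set G :=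
  cell P (insert 1 T) (F \ T)

section Atom

variable [DecidableEq G] {F T : Finset G}

theorem atom_subset : atom P F T ⊆ P := fun x hx => by
  simpa [QLe] using hx.1 1 (Finset.mem_insert_self 1 T)

theorem memBP_atom (hF : (F : Set G) ⊆ P) (hT : T ⊆ F) : MemBP P (atom P F T) :=
  memBP_cell (Finset.insert_nonempty 1 T)
    (by push_cast; exact Set.insert_subset P.one_mem ((Finset.coe_subset.2 hT).trans hF))
    ((Finset.coe_subset.2 Finset.sdiff_subset).trans hF)

theorem qle_iff_mem_of_mem_atom {x q : G} (hx : x ∈ atom P F T) (hq : q ∈ F) :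
    QLe P q x ↔ q ∈ T :=
  ⟨fun h => by_contra fun hqT => hx.2 q (Finset.mem_sdiff.2 ⟨hq, hqT⟩) h,
    fun h => hx.1 q (Finset.mem_insert_of_mem h)⟩

theorem atom_pairwiseDisjoint (F : Finset G) :
    (F.powerset : Set (Finset G)).PairwiseDisjoint (atom P F) := by
  intro T hT T' hT' hne
  rw [Finset.mem_coe, Finset.mem_powerset] at hT hT'
  refine Set.disjoint_left.2 fun x hx hx' => hne (Finset.ext fun q => ?_)
  by_cases hq : q ∈ F
  · rw [← qle_iff_mem_of_mem_atom hx hq, qle_iff_mem_of_mem_atom hx' hq]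
  · exact iff_of_false (fun h => hq (hT h)) fun h => hq (hT' h)

theorem biUnion_atom (F : Finset G) : ⋃ T ∈ F.powerset, atom P F T = P := by
  classical
  refine Set.Subset.antisymm (Set.iUnion₂_subset fun _ _ => atom_subset) fun x hx => ?_
  refine Set.mem_iUnion₂.2 ⟨F.filter (QLe P · x), Finset.mem_powerset.2 (Finset.filter_subset _ _),
    ?_, ?_⟩
  · refine fun p hp => (Finset.mem_insert.1 hp).elim (fun h => ?_) (Finset.mem_filter.1 · |>.2)
    simpa [h, QLe] using hx
  · simpa using fun r hr h => h hr

theorem QuasiLatticeOrdered.eq_of_mem_atom (hQL : QuasiLatticeOrdered P) {b q : G}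
    (hb : b ∈ atom P F T) (hb_least : ∀ y ∈ atom P F T, QLe P b y) (hq : q ∈ atom P F T)
    (hqF : q ∈ F) : q = b :=
  hQL.qle_antisymm ((qle_iff_mem_of_mem_atom hb hqF).2 ((qle_iff_mem_of_mem_atom hq hqF).1
    (QLe.refl P q))) (hb_least q hq)

end Atom

theorem exists_lt_of_wt_lt {μ : Set G → ℝ} {p : G} (hp : p ∈ P) {c : ℝ} (hc : wt P μ p < c) :
    ∃ Ω, MemBP P Ω ∧ p ∈ Ω ∧ μ Ω < c := by
  obtain ⟨_, ⟨Ω, hΩ, hpΩ, rfl⟩, hlt⟩ :=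
    exists_lt_of_csInf_lt (s := {r | ∃ Ω, MemBP P Ω ∧ p ∈ Ω ∧ μ Ω = r})
      ⟨μ P, P, memBP_univ, hp, rfl⟩ hc
  exact ⟨Ω, hΩ, hpΩ, hlt⟩

theorem exists_finset_forall_sum_lt {α : Type*} {s : Set α} {g : α → ℝ}
    (hg : Summable fun a : s => g a) {ε : ℝ} (hε : 0 < ε) :
    ∃ F : Finset α, (F : Set α) ⊆ s ∧
      ∀ U : Finset α, (U : Set α) ⊆ s → Disjoint U F → ∑ u ∈ U, g u < ε := by
  classical
  obtain ⟨F, hF⟩ := summable_iff_vanishing.1 hg (Metric.ball 0 ε) (Metric.ball_mem_nhds 0 hε)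
  refine ⟨F.map (Function.Embedding.subtype _), fun x hx => by
    obtain ⟨a, -, rfl⟩ := Finset.mem_map.1 (Finset.mem_coe.1 hx)
    exact a.2, fun U hUs hUF => ?_⟩
  have h := hF (U.subtype (· ∈ s)) (Finset.disjoint_left.2 fun a ha haF =>
    Finset.disjoint_left.1 hUF (Finset.mem_subtype.1 ha) (Finset.mem_map_of_mem _ haF))
  rw [Finset.sum_subtype_of_mem g hUs, Metric.mem_ball, dist_zero_right, Real.norm_eq_abs] at h
  exact (le_abs_self _).trans_lt h

structure IsBPContent (P : Submonoid G) (μ : Set G → ℝ) : Prop where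
  nonneg : ∀ Ω, MemBP P Ω → 0 ≤ μ Ω
  add : ∀ Ω₁ Ω₂, MemBP P Ω₁ → MemBP P Ω₂ → Disjoint Ω₁ Ω₂ → μ (Ω₁ ∪ Ω₂) = μ Ω₁ + μ Ω₂

namespace IsBPContent

variable {μ : Set G → ℝ}

theorem measure_empty (hμ : IsBPContent P μ) : μ ∅ = 0 := by
  have h := hμ.add ∅ ∅ memBP_empty memBP_empty (by simp)
  simp only [Set.union_self] at h
  linarith

theorem measure_eq_add_sdiff (hμ : IsBPContent P μ) {A B : Set G} (hA : MemBP P A)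
    (hB : MemBP P B) (hBA : B ⊆ A) : μ A = μ B + μ (A \ B) := by
  rw [← hμ.add _ _ hB (hA.sdiff hB) Set.disjoint_sdiff_right, Set.union_sdiff_cancel hBA]

theorem mono (hμ : IsBPContent P μ) {A B : Set G} (hA : MemBP P A) (hB : MemBP P B)
    (hAB : A ⊆ B) : μ A ≤ μ B := by
  rw [hμ.measure_eq_add_sdiff hB hA hAB]
  linarith [hμ.nonneg _ (hB.sdiff hA)]

theorem measure_union_le (hμ : IsBPContent P μ) {A B : Set G} (hA : MemBP P A)
    (hB : MemBP P B) : μ (A ∪ B) ≤ μ A + μ B := by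
  rw [← Set.union_sdiff_self, hμ.add _ _ hA (hB.sdiff hA) Set.disjoint_sdiff_right]
  linarith [hμ.mono (hB.sdiff hA) hB Set.sdiff_subset]

theorem measure_biUnion_le (hμ : IsBPContent P μ) {ι : Type*} (t : Finset ι) {f : ι → Set G}
    (h : ∀ i ∈ t, MemBP P (f i)) : μ (⋃ i ∈ t, f i) ≤ ∑ i ∈ t, μ (f i) := by
  classical
  induction t using Finset.induction_on with
  | empty => simp [hμ.measure_empty]
  | insert a t ha ih =>
    have ht : ∀ i ∈ t, MemBP P (f i) := fun i hi => h i (by simp [hi])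
    rw [Finset.set_biUnion_insert, Finset.sum_insert ha]
    exact (hμ.measure_union_le (h a (by simp)) (memBP_biUnion t ht)).trans
      (add_le_add_right (ih ht) _)

theorem measure_biUnion (hμ : IsBPContent P μ) {ι : Type*} (t : Finset ι) {f : ι → Set G}
    (h : ∀ i ∈ t, MemBP P (f i)) (hd : (t : Set ι).PairwiseDisjoint f) :
    μ (⋃ i ∈ t, f i) = ∑ i ∈ t, μ (f i) := by
  classical
  induction t using Finset.induction_on with
  | empty => simp [hμ.measure_empty]
  | insert a t ha ih =>
    have ht : ∀ i ∈ t, MemBP P (f i) := fun i hi => h i (by simp [hi])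
    rw [Finset.set_biUnion_insert, Finset.sum_insert ha,
      hμ.add _ _ (h a (by simp)) (memBP_biUnion t ht), ih ht (hd.subset (by simp))]
    refine Set.disjoint_iUnion₂_right.2 fun i hi => hd (by simp) (by simp [hi]) ?_
    rintro rfl
    exact ha hi

theorem wt_nonneg (hμ : IsBPContent P μ) (p : G) : 0 ≤ wt P μ p :=
  Real.sInf_nonneg fun _ ⟨Ω, hΩ, _, hr⟩ => hr ▸ hμ.nonneg Ω hΩ

theorem wt_le (hμ : IsBPContent P μ) {p : G} {Ω : Set G} (hΩ : MemBP P Ω) (hp : p ∈ Ω) :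
    wt P μ p ≤ μ Ω :=
  csInf_le ⟨0, fun _ ⟨Ω', hΩ', _, hr⟩ => hr ▸ hμ.nonneg Ω' hΩ'⟩ ⟨Ω, hΩ, hp, rfl⟩

theorem summable_wt (hμ : IsBPContent P μ)
    (hsum : Summable fun p : P => μ {x | QLe P (p : G) x}) {A : Set G} (hA : A ⊆ P) :
    Summable fun p : A => wt P μ p :=
  (hsum.comp_injective (Set.inclusion_injective hA)).of_nonneg_of_le (fun _ => hμ.wt_nonneg _)
    fun p => hμ.wt_le (MemBP.basic _ (hA p.2)) (QLe.refl P p)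

theorem sum_wt_le (hμ : IsBPContent P μ) (hQL : QuasiLatticeOrdered P) {Ω : Set G}
    (hΩ : MemBP P Ω) {t : Finset G} (ht : (t : Set G) ⊆ Ω) : ∑ p ∈ t, wt P μ p ≤ μ Ω := by
  classical
  let N : G → Set G := fun p => Ω ∩ cell P {p} (t.filter fun q => ¬ QLe P q p)
  have hN : ∀ p ∈ t, MemBP P (N p) := fun p hp =>
    MemBP.inter _ _ hΩ (memBP_cell (Finset.singleton_nonempty p)
      (by simpa using hΩ.subset (ht hp)) fun q hq => hΩ.subset (ht (Finset.mem_filter.1 hq).1))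
  have hpN : ∀ p ∈ t, p ∈ N p := fun p hp =>
    ⟨ht hp, by simp [QLe.refl], fun q hq => (Finset.mem_filter.1 hq).2⟩
  have hdisj : (t : Set G).PairwiseDisjoint N := by
    intro p hp q hq hpq
    refine Set.disjoint_left.2 fun x hxp hxq => hpq (hQL.qle_antisymm ?_ ?_)
    · by_contra h
      exact hxq.2.2 p (Finset.mem_filter.2 ⟨hp, h⟩) (hxp.2.1 p (Finset.mem_singleton_self p))
    · by_contra h
      exact hxp.2.2 q (Finset.mem_filter.2 ⟨hq, h⟩) (hxq.2.1 q (Finset.mem_singleton_self q))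
  calc ∑ p ∈ t, wt P μ p ≤ ∑ p ∈ t, μ (N p) :=
        Finset.sum_le_sum fun p hp => hμ.wt_le (hN p hp) (hpN p hp)
    _ = μ (⋃ p ∈ t, N p) := (hμ.measure_biUnion t hN hdisj).symm
    _ ≤ μ Ω := hμ.mono (memBP_biUnion t hN) hΩ (Set.iUnion₂_subset fun _ _ => Set.inter_subset_left)

theorem tsum_wt_le (hμ : IsBPContent P μ) (hQL : QuasiLatticeOrdered P)
    (hsum : Summable fun p : P => μ {x | QLe P (p : G) x}) {Ω : Set G} (hΩ : MemBP P Ω) :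
    ∑' p : Ω, wt P μ p ≤ μ Ω :=
  (hμ.summable_wt hsum hΩ.subset).tsum_le_of_sum_le fun s => by
    simpa using hμ.sum_wt_le hQL hΩ (t := s.map (Function.Embedding.subtype _)) (by simp)

theorem exists_measure_cell_le (hμ : IsBPContent P μ)
    (hQL : QuasiLatticeOrdered P) {S R : Finset G} (hS : S.Nonempty) (hSP : (S : Set G) ⊆ P)
    (hRP : (R : Set G) ⊆ P) {b : G} (hb : b ∈ cell P S R)
    (hb_least : ∀ y ∈ cell P S R, QLe P b y) {ε : ℝ} (hε : 0 < ε) :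
    ∃ U : Finset G, (U : Set G) ⊆ cell P S R \ {b} ∧
      μ (cell P S R) ≤ wt P μ b + ε + ∑ u ∈ U, μ {x | QLe P u x} := by
  classical
  have hbP : b ∈ P := cell_subset R hS hSP hb
  obtain ⟨Ω, hΩ, hbΩ, hμΩ⟩ := exists_lt_of_wt_lt hbP (lt_add_of_pos_right (wt P μ b) hε)
  obtain ⟨R', hR'P, hbR', hsub | hdisj⟩ := hΩ.exists_cell_subset_or_disjoint hbP
  swap
  · exact absurd hbΩ (Set.disjoint_left.1 hdisj hbR')
  obtain ⟨U, hUA, hUR', hcover⟩ := hQL.exists_cover_cell_sdiff S R R'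
  have hA : MemBP P (cell P S R) := memBP_cell hS hSP hRP
  have hC : MemBP P (cell P S (R ∪ R')) :=
    memBP_cell hS hSP (by push_cast; exact Set.union_subset hRP hR'P)
  have hCA : cell P S (R ∪ R') ⊆ cell P S R := by
    rw [cell_union_right]
    exact Set.inter_subset_left
  have hCΩ : cell P S (R ∪ R') ⊆ Ω := fun x hx => by
    rw [cell_union_right] at hx
    exact hsub ⟨by simpa using hb_least x hx.1, hx.2.2⟩
  have hU : ∀ u ∈ U, MemBP P {x | QLe P u x} := fun u hu =>
    MemBP.basic u (cell_subset R hS hSP (hUA hu))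
  refine ⟨U, fun u hu => ⟨hUA hu, fun hub => ?_⟩, ?_⟩
  · obtain ⟨r, hr, hru⟩ := hUR' u hu
    exact hbR'.2 r hr (Set.mem_singleton_iff.1 hub ▸ hru)
  calc μ (cell P S R) = μ (cell P S (R ∪ R')) + μ (cell P S R \ cell P S (R ∪ R')) :=
        hμ.measure_eq_add_sdiff hA hC hCA
    _ ≤ μ Ω + μ (⋃ u ∈ U, {x | QLe P u x}) :=
        add_le_add (hμ.mono hC hΩ hCΩ) (hμ.mono (hA.sdiff hC) (memBP_biUnion U hU) hcover)
    _ ≤ wt P μ b + ε + ∑ u ∈ U, μ {x | QLe P u x} :=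
        add_le_add hμΩ.le (hμ.measure_biUnion_le U hU)

theorem exists_measure_atom_le [DecidableEq G] (hμ : IsBPContent P μ)
    (hQL : QuasiLatticeOrdered P) (hsum : Summable fun p : P => μ {x | QLe P (p : G) x})
    {F T : Finset G} (hF : (F : Set G) ⊆ P) (hT : T ⊆ F) {ε : ℝ} (hε : 0 < ε) :
    ∃ U : Finset G, (U : Set G) ⊆ atom P F T ∧ Disjoint U F ∧
      μ (atom P F T) ≤ ∑' p : atom P F T, wt P μ p + ε + ∑ u ∈ U, μ {x | QLe P u x} := by
  have hν : 0 ≤ ∑' p : atom P F T, wt P μ p := tsum_nonneg fun p => hμ.wt_nonneg p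
  rcases (atom P F T).eq_empty_or_nonempty with h | ⟨x, hx⟩
  · refine ⟨∅, by simp, by simp, ?_⟩
    have h₀ : μ (atom P F T) = 0 := h ▸ hμ.measure_empty
    rw [Finset.sum_empty, h₀]
    linarith
  obtain ⟨b, hb, hb_least⟩ := hQL.exists_least_of_mem_cell (Finset.insert_nonempty 1 T) hx
  obtain ⟨U, hU, hμU⟩ := hμ.exists_measure_cell_le hQL (Finset.insert_nonempty 1 T)
    (by push_cast; exact Set.insert_subset P.one_mem ((Finset.coe_subset.2 hT).trans hF))
    ((Finset.coe_subset.2 Finset.sdiff_subset).trans hF) hb hb_least hε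
  refine ⟨U, fun u hu => (hU hu).1, Finset.disjoint_left.2 fun u hu huF =>
    (hU hu).2 (hQL.eq_of_mem_atom hb hb_least (hU hu).1 huF), ?_⟩
  have hwb : wt P μ b ≤ ∑' p : atom P F T, wt P μ p :=
    (hμ.summable_wt hsum atom_subset).le_tsum ⟨b, hb⟩ fun p _ => hμ.wt_nonneg p
  exact hμU.trans (by linarith)

theorem measure_le_tsum_wt (hμ : IsBPContent P μ) (hQL : QuasiLatticeOrdered P)
    (hsum : Summable fun p : P => μ {x | QLe P (p : G) x}) :
    μ P ≤ ∑' p : (P : Set G), wt P μ p := by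
  classical
  refine le_of_forall_pos_le_add fun ε hε => ?_
  obtain ⟨F, hFP, hF⟩ := exists_finset_forall_sum_lt (s := P) (g := fun p => μ {x | QLe P p x})
    hsum (half_pos hε)
  have hn : (0 : ℝ) < F.powerset.card := by
    exact_mod_cast Finset.card_pos.2 ⟨∅, Finset.empty_mem_powerset F⟩
  have hatom := fun T (hT : T ∈ F.powerset) =>
    hμ.exists_measure_atom_le hQL hsum hFP (Finset.mem_powerset.1 hT) (div_pos (half_pos hε) hn)
  choose! U hUA hUF hμU using hatom
  have hUdisj : (F.powerset : Set (Finset G)).PairwiseDisjoint U := fun T hT T' hT' hne =>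
    Finset.disjoint_coe.1 ((atom_pairwiseDisjoint F hT hT' hne).mono (hUA T hT) (hUA T' hT'))
  have htail : ∑ u ∈ F.powerset.biUnion U, μ {x | QLe P u x} < ε / 2 := by
    refine hF _ ?_ ((Finset.disjoint_biUnion_left _ _ _).2 hUF)
    rw [Finset.coe_biUnion]
    exact Set.iUnion₂_subset fun T hT => (hUA T hT).trans atom_subset
  have hμP : μ P = ∑ T ∈ F.powerset, μ (atom P F T) := by
    have h := hμ.measure_biUnion F.powerset
      (fun T hT => memBP_atom hFP (Finset.mem_powerset.1 hT)) (atom_pairwiseDisjoint F)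
    rwa [biUnion_atom] at h
  have hνP : ∑' p : (P : Set G), wt P μ p = ∑ T ∈ F.powerset, ∑' p : atom P F T, wt P μ p := by
    have h := Summable.tsum_finset_bUnion_disjoint (f := wt P μ) (atom_pairwiseDisjoint F)
      fun T _ => hμ.summable_wt hsum atom_subset
    rwa [biUnion_atom] at h
  calc μ P ≤ ∑ T ∈ F.powerset, (∑' p : atom P F T, wt P μ p + ε / 2 / F.powerset.card +
        ∑ u ∈ U T, μ {x | QLe P u x}) := hμP ▸ Finset.sum_le_sum hμU
    _ = ∑' p : (P : Set G), wt P μ p + ε / 2 + ∑ u ∈ F.powerset.biUnion U, μ {x | QLe P u x} := by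
        rw [Finset.sum_add_distrib, Finset.sum_add_distrib, Finset.sum_const, nsmul_eq_mul,
          mul_div_cancel₀ _ hn.ne', Finset.sum_biUnion hUdisj, hνP]
    _ ≤ ∑' p : (P : Set G), wt P μ p + ε := by linarith

end IsBPContent

end

theorem stmt8_general {G : Type*} [Group G] (P : Submonoid G) (hQL : QuasiLatticeOrdered P)
    (μ : Set G → ℝ)
    (hpos : ∀ Ω : Set G, MemBP P Ω → 0 ≤ μ Ω)
    (hadd : ∀ Ω₁ Ω₂ : Set G, MemBP P Ω₁ → MemBP P Ω₂ → Disjoint Ω₁ Ω₂ →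
      μ (Ω₁ ∪ Ω₂) = μ Ω₁ + μ Ω₂)
    (hsum : Summable fun p : P => μ {x | QLe P (p : G) x}) :
    ∀ Ω : Set G, MemBP P Ω →
      (Summable fun p : Ω => wt P μ (p : G)) ∧ μ Ω = ∑' p : Ω, wt P μ (p : G) := by
  intro Ω hΩ
  have hμ : IsBPContent P μ := ⟨hpos, hadd⟩
  have hΩc : MemBP P ((P : Set G) \ Ω) := MemBP.compl _ hΩ
  refine ⟨hμ.summable_wt hsum hΩ.subset, le_antisymm ?_ (hμ.tsum_wt_le hQL hsum hΩ)⟩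
  have hμP : μ P = μ Ω + μ ((P : Set G) \ Ω) := hμ.measure_eq_add_sdiff memBP_univ hΩ hΩ.subset
  have hνP : ∑' p : (P : Set G), wt P μ p =
      ∑' p : Ω, wt P μ p + ∑' p : ↥((P : Set G) \ Ω), wt P μ p := by
    have h := Summable.tsum_union_disjoint (f := wt P μ) Set.disjoint_sdiff_right
      (hμ.summable_wt hsum hΩ.subset) (hμ.summable_wt hsum hΩc.subset)
    rwa [Set.union_sdiff_cancel hΩ.subset] at h
  linarith [hμ.measure_le_tsum_wt hQL hsum, hμ.tsum_wt_le hQL hsum hΩc]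

/-- If `μ` is a finitely additive probability measure on `(P, B_P)` with `(μ(pP))_{p ∈ P}`
summable, then for every `Ω ∈ B_P`, `(w_p)_{p ∈ Ω}` is summable with `μ(Ω) = ∑_{p ∈ Ω} w_p`. -/
theorem stmt8 {G : Type*} [Group G] (P : Submonoid G) (hQL : QuasiLatticeOrdered P)
    (μ : Set G → ℝ)
    (hpos : ∀ Ω : Set G, MemBP P Ω → 0 ≤ μ Ω)
    (hone : μ (P : Set G) = 1)
    (hadd : ∀ Ω₁ Ω₂ : Set G, MemBP P Ω₁ → MemBP P Ω₂ → Disjoint Ω₁ Ω₂ →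
      μ (Ω₁ ∪ Ω₂) = μ Ω₁ + μ Ω₂)
    (hsum : Summable fun p : P => μ {x | QLe P (p : G) x}) :
    ∀ Ω : Set G, MemBP P Ω →
      (Summable fun p : Ω => wt P μ (p : G)) ∧ μ Ω = ∑' p : Ω, wt P μ (p : G) :=
  stmt8_general P hQL μ hpos hadd hsum
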